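/- For every k ∈ ℕ, writing 𝒜 = 𝒜(ℓ~_{N(k)}), one has 𝒜/2 ≤ k ≤ 𝒜/2 + √𝒜. -/

import Mathlib

open MeasureTheory Filter

/-- Initial local time: edge `i` denotes the half-integer edge `i + 1/2`
joining `i` and `i+1`; `aInit i = a(i + 1/2)`, which is `0` if `|i+1/2| - 1/2`
is even and `-1` if it is odd. -/
def aInit (i : ℤ) : ℤ := if Even (if 0 ≤ i then i else -i - 1) then 0 else -1

/-- State of the self-repelling walk: current position, edge local times
(`loc i` is the local time of the edge joining `i` and `i+1`, i.e. of the
half-integer edge `i + 1/2`), and the number of coins used so far. -/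
structure SRWState where
  pos : ℤ
  loc : ℤ → ℤ
  coins : ℕ

/-- One step of the self-repelling walk driven by the coin sequence `ε`. -/
def srwStep (ε : ℕ → ℤ) (s : SRWState) : SRWState :=
  let lm := s.loc (s.pos - 1)   -- ℓ_n⁻ = ℓ_n(X_n - 1/2)
  let lp := s.loc s.pos         -- ℓ_n⁺ = ℓ_n(X_n + 1/2)
  let next : ℤ := if lp < lm then s.pos + 1
    else if lm < lp then s.pos - 1
    else s.pos + ε s.coins
  { pos := next
    loc := fun i => if i = min s.pos next then s.loc i + 1 else s.loc i
    coins := if lm = lp then s.coins + 1 else s.coins }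

/-- The self-repelling walk: state after `n` steps. -/
def srw (ε : ℕ → ℤ) : ℕ → SRWState
  | 0 => ⟨0, aInit, 0⟩
  | n + 1 => srwStep ε (srw ε n)

/-- Position `X_n` of the self-repelling walk. -/
def Xwalk (ε : ℕ → ℤ) (n : ℕ) : ℤ := (srw ε n).pos

/-- Edge local time `ℓ_n(i + 1/2)`. -/
def ellEdge (ε : ℕ → ℤ) (n : ℕ) (i : ℤ) : ℤ := (srw ε n).loc i

/-- `ℓ_n⁻ = ℓ_n(X_n - 1/2)`. -/
def ellMinus (ε : ℕ → ℤ) (n : ℕ) : ℤ := ellEdge ε n (Xwalk ε n - 1)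

/-- `ℓ_n⁺ = ℓ_n(X_n + 1/2)`. -/
def ellPlus (ε : ℕ → ℤ) (n : ℕ) : ℤ := ellEdge ε n (Xwalk ε n)

/-- `n` is an equality time: `ℓ_n⁻ = ℓ_n⁺`. -/
def IsEqTime (ε : ℕ → ℤ) (n : ℕ) : Prop := ellMinus ε n = ellPlus ε n

/-- `N(k)`: the `(k+1)`-st smallest equality time. -/
noncomputable def timeN (ε : ℕ → ℤ) (k : ℕ) : ℕ := Nat.nth (IsEqTime ε) k

/-- `H_n = (ℓ_n⁻ + ℓ_n⁺)/2`. -/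
def Hheight (ε : ℕ → ℤ) (n : ℕ) : ℤ := (ellMinus ε n + ellPlus ε n) / 2

/-- `ã(x)`: `0` for even `x`, `-1` for odd `x`. -/
def aTilde (x : ℤ) : ℤ := if Even x then 0 else -1

/-- Modified local time `ℓ~_n(x)`: equals `ℓ_n(x - 1/2)` for `x ≤ X_n` and
`ℓ_n(x + 1/2)` for `x > X_n`. -/
def modLoc (ε : ℕ → ℤ) (n : ℕ) (x : ℤ) : ℤ :=
  if x ≤ Xwalk ε n then ellEdge ε n (x - 1) else ellEdge ε n x

/-- Area `𝒜(f) = Σ_x (f(x) - ã(x))` between `f` and `ã`. -/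
noncomputable def areaA (f : ℤ → ℤ) : ℤ := ∑ᶠ x : ℤ, (f x - aTilde x)

/-- `m₋(f) = 1 + max {x ≤ 0 : f x = -1}`. -/
noncomputable def mMinus (f : ℤ → ℤ) : ℤ := 1 + sSup {x : ℤ | x ≤ 0 ∧ f x = -1}

/-- `m₊(f) = -1 + min {x ≥ 0 : f x = -1}`. -/
noncomputable def mPlus (f : ℤ → ℤ) : ℤ := -1 + sInf {x : ℤ | 0 ≤ x ∧ f x = -1}

/-- `O(f)`: the number of zeros of `f` strictly between `m₋(f)` and `m₊(f)`. -/
noncomputable def nZeros (f : ℤ → ℤ) : ℕ :=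
  {x : ℤ | mMinus f < x ∧ x < mPlus f ∧ f x = 0}.ncard

/-- `o₊ = max {x < m₊(f) : f x = 0}`. -/
noncomputable def oPlus (f : ℤ → ℤ) : ℤ := sSup {x : ℤ | x < mPlus f ∧ f x = 0}

/-- `o₋ = min {x > m₋(f) : f x = 0}`. -/
noncomputable def oMinus (f : ℤ → ℤ) : ℤ := sInf {x : ℤ | mMinus f < x ∧ f x = 0}

open Classical in
/-- The admissible interval `I(f)`. -/
noncomputable def interI (f : ℤ → ℤ) : Set ℤ :=
  if f = aTilde then {0}
  else if nZeros f = 0 then Set.Icc (mMinus f) (mPlus f)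
  else if 0 < oPlus f then Set.Ioc (oPlus f) (mPlus f)
  else Set.Ico (mMinus f) (oMinus f)

/-- Coins as `±1`-valued integers from booleans. -/
def coin (ω : ℕ → Bool) (j : ℕ) : ℤ := if ω j then 1 else -1

/-!
Write `ℓ~` for the modified local time of the current state; it records every edge local time
except `ℓ⁺`, and `ℓ⁻ = ℓ~(X)`. Along the walk `ℓ~ - ã` stays even, `ℓ~` is `1`-Lipschitz away
from `X`, `ℓ⁻ - ℓ⁺ ∈ {-2, 0, 2}`, and every step changes `ℓ~` at a single site. Tracking these
changes gives the conservation law `2 · (coins used) = 𝒜(ℓ~) + ℓ⁺ + max ℓ⁻ ℓ⁺`.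

At the equality time `N(k)` exactly `k` coins have been used and `ℓ⁻ = ℓ⁺ = H ≥ 0`, so
`k = 𝒜/2 + H`. There `ℓ~` is `1`-Lipschitz everywhere, takes the value `H` at `X` and lies above
`ã`, so the region between `ã` and `ℓ~` contains a tent of height `H` and `𝒜 ≥ H²`.
Between equality times `max ℓ⁻ ℓ⁺ ≥ 0` drops by one per step, so equality times recur.
-/

open Function

theorem aTilde_add_one (x : ℤ) : aTilde (x + 1) = -1 - aTilde x := by
  by_cases h : Even x <;> simp [aTilde, h]

theorem aTilde_nonpos (x : ℤ) : aTilde x ≤ 0 := by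
  unfold aTilde; split <;> norm_num

theorem aTilde_le_of_two_dvd_sub {x y : ℤ} (hy : -1 ≤ y) (h : (2 : ℤ) ∣ y - aTilde x) :
    aTilde x ≤ y := by
  unfold aTilde at *
  by_cases hx : Even x <;> simp only [hx, if_true, if_false] at * <;> omega

theorem areaA_aTilde : areaA aTilde = 0 := by
  simp [areaA]

theorem hasFiniteSupport_update_sub {f g : ℤ → ℤ} (hf : HasFiniteSupport fun x => f x - g x)
    (a b : ℤ) : HasFiniteSupport fun x => update f a b x - g x := by
  refine (hf.insert a).subset fun x hx => ?_
  rcases eq_or_ne x a with rfl | hxa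
  · exact Set.mem_insert x _
  · exact Set.mem_insert_of_mem a (by simpa [update_of_ne hxa] using hx)

theorem areaA_update {f : ℤ → ℤ} (hf : HasFiniteSupport fun x => f x - aTilde x) (a b : ℤ) :
    areaA (update f a b) = areaA f + (b - f a) := by
  have hsingle : ∀ x ≠ a, update f a b x - f x = 0 := fun x hx => by simp [update_of_ne hx]
  have hfin : HasFiniteSupport fun x => update f a b x - f x :=
    (Set.finite_singleton a).subset fun x hx => by_contra fun hxa => hx (hsingle x hxa)
  calc areaA (update f a b)
      = ∑ᶠ x, ((f x - aTilde x) + (update f a b x - f x)) := finsum_congr fun x => by ring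
    _ = areaA f + (b - f a) := by
      rw [finsum_add_distrib hf hfin, finsum_eq_single _ a hsingle, update_self]; rfl

theorem sum_le_areaA {f : ℤ → ℤ} (hge : ∀ x, aTilde x ≤ f x)
    (hf : HasFiniteSupport fun x => f x - aTilde x) (t : Finset ℤ) :
    ∑ x ∈ t, (f x - aTilde x) ≤ areaA f := by
  classical
  have hf' : (support fun x => f x - aTilde x).Finite := hf
  rw [areaA, finsum_eq_sum_of_support_subset _ (s := hf'.toFinset ∪ t)
    (by rw [Finset.coe_union, hf'.coe_toFinset]; exact Set.subset_union_left)]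
  exact Finset.sum_le_sum_of_subset_of_nonneg Finset.subset_union_right
    fun x _ _ => sub_nonneg.mpr (hge x)

theorem sub_le_apply_add_and_sub {f : ℤ → ℤ} (hlip : ∀ x, |f (x + 1) - f x| ≤ 1) (p : ℤ)
    (n : ℕ) : f p - n ≤ f (p + n) ∧ f p - n ≤ f (p - n) := by
  induction n with
  | zero => simp
  | succ n ih =>
    have hR := abs_le.mp (hlip (p + n))
    have hL := abs_le.mp (hlip (p - (n + 1)))
    push_cast
    rw [← add_assoc, show p - (n + 1) + 1 = p - n by ring] at *
    constructor <;> linarith [ih.1, ih.2]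

/-- The tent of height `H = f p` under a `1`-Lipschitz `f ≥ ã` has area `H²`. -/
theorem sq_le_areaA {f : ℤ → ℤ} (p : ℤ) (hlip : ∀ x, |f (x + 1) - f x| ≤ 1)
    (hge : ∀ x, aTilde x ≤ f x) (hf : HasFiniteSupport fun x => f x - aTilde x)
    (hp : 0 ≤ f p) : f p ^ 2 ≤ areaA f := by
  have htent : ∀ n : ℕ, (2 * n + 1) * f p - n * (n + 1) ≤
      ∑ x ∈ Finset.Icc (p - n) (p + n), (f x - aTilde x) := by
    intro n
    induction n with
    | zero => simpa using aTilde_nonpos p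
    | succ n ih =>
      have hIcc : Finset.Icc (p - (n + 1 : ℕ)) (p + (n + 1 : ℕ)) =
          insert (p - (n + 1 : ℕ)) (insert (p + (n + 1 : ℕ)) (Finset.Icc (p - n) (p + n))) := by
        ext y; simp only [Finset.mem_Icc, Finset.mem_insert]; push_cast; omega
      rw [hIcc, Finset.sum_insert (by simp; omega), Finset.sum_insert (by simp)]
      have hbound := sub_le_apply_add_and_sub hlip p (n + 1)
      have hR := aTilde_nonpos (p + (n + 1 : ℕ))
      have hL := aTilde_nonpos (p - (n + 1 : ℕ))
      push_cast at *
      linarith [hbound.1, hbound.2]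
  set n := (f p - 1).toNat with hn
  have hsq : f p ^ 2 ≤ (2 * n + 1) * f p - n * (n + 1) := by
    rcases hp.lt_or_eq with hpos | hzero
    · rw [hn, Int.toNat_of_nonneg (by omega)]; nlinarith
    · rw [← hzero] at hn ⊢; simp [hn]
  exact hsq.trans ((htent n).trans (sum_le_areaA hge hf _))

namespace SRWState

variable (s : SRWState)

def locLeft : ℤ := s.loc (s.pos - 1)

def locRight : ℤ := s.loc s.pos

def modLoc (x : ℤ) : ℤ := if x ≤ s.pos then s.loc (x - 1) else s.loc x

def nextCoins : ℕ := if s.locLeft = s.locRight then s.coins + 1 else s.coins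

def stepRight : SRWState := ⟨s.pos + 1, update s.loc s.pos (s.locRight + 1), s.nextCoins⟩

def stepLeft : SRWState := ⟨s.pos - 1, update s.loc (s.pos - 1) (s.locLeft + 1), s.nextCoins⟩

theorem stepRight_pos : s.stepRight.pos = s.pos + 1 := rfl

theorem stepLeft_pos : s.stepLeft.pos = s.pos - 1 := rfl

theorem modLoc_pos : s.modLoc s.pos = s.locLeft := if_pos le_rfl

theorem modLoc_pos_add_one : s.modLoc (s.pos + 1) = s.loc (s.pos + 1) := if_neg (by omega)

theorem modLoc_pos_sub_one : s.modLoc (s.pos - 1) = s.loc (s.pos - 1 - 1) := if_pos (by omega)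

theorem stepRight_locLeft : s.stepRight.locLeft = s.locRight + 1 := by
  simp [stepRight, locLeft, locRight]

theorem stepRight_locRight : s.stepRight.locRight = s.modLoc (s.pos + 1) := by
  simp [stepRight, locRight, modLoc_pos_add_one]

theorem stepRight_modLoc : s.stepRight.modLoc = update s.modLoc (s.pos + 1) (s.locRight + 1) := by
  funext x
  simp only [modLoc, stepRight, update_apply]
  split_ifs <;> omega

theorem stepLeft_locLeft : s.stepLeft.locLeft = s.modLoc (s.pos - 1) := by
  simp [stepLeft, locLeft, modLoc_pos_sub_one]

theorem stepLeft_locRight : s.stepLeft.locRight = s.locLeft + 1 := by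
  simp [stepLeft, locRight, locLeft]

theorem stepLeft_modLoc : s.stepLeft.modLoc = update s.modLoc s.pos s.locRight := by
  funext x
  simp only [modLoc, stepLeft, update_apply]
  split_ifs <;> first | omega | simp_all [locRight]

theorem srwStep_eq_stepRight_or_stepLeft {ε : ℕ → ℤ} (hε : ε s.coins = 1 ∨ ε s.coins = -1) :
    s.locRight ≤ s.locLeft ∧ srwStep ε s = s.stepRight ∨
      s.locLeft ≤ s.locRight ∧ srwStep ε s = s.stepLeft := by
  have hloc (q : ℤ) :
      (fun i => if i = q then s.loc i + 1 else s.loc i) = update s.loc q (s.loc q + 1) := by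
    funext i; by_cases hi : i = q <;> simp [hi]
  unfold srwStep stepRight stepLeft nextCoins locLeft locRight
  rcases lt_trichotomy (s.loc (s.pos - 1)) (s.loc s.pos) with h | h | h
  · right
    simp [h, h.ne, not_lt_of_gt h, h.le, hloc]
  · rcases hε with hε | hε
    · left; simp [h, hε, hloc]
    · have hnext : s.pos + ε s.coins = s.pos - 1 := by rw [hε]; ring
      right; simp [h, hnext, hloc]
  · left
    simp [h, h.ne', h.le, hloc]

structure Inv : Prop where
  neg_one_le_modLoc : ∀ x, -1 ≤ s.modLoc x
  neg_one_le_locRight : -1 ≤ s.locRight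
  two_dvd_modLoc_sub : ∀ x, (2 : ℤ) ∣ s.modLoc x - aTilde x
  two_dvd_locLeft_sub : (2 : ℤ) ∣ s.locLeft - s.locRight
  abs_modLoc_succ_sub_le : ∀ x ≠ s.pos, |s.modLoc (x + 1) - s.modLoc x| ≤ 1
  abs_locRight_sub_le : |s.locRight - s.modLoc (s.pos + 1)| ≤ 1
  abs_locLeft_sub_le : |s.locLeft - s.locRight| ≤ 2
  nonneg : 0 ≤ s.locLeft ∨ 0 ≤ s.locRight
  hasFiniteSupport : HasFiniteSupport fun x => s.modLoc x - aTilde x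
  area : 2 * (s.coins : ℤ) = areaA s.modLoc + s.locRight + max s.locLeft s.locRight

variable {s}

theorem Inv.stepRight (hs : s.Inv) (hle : s.locRight ≤ s.locLeft) : s.stepRight.Inv := by
  have hpar := hs.two_dvd_modLoc_sub
  have h0 := hpar s.pos
  have h1 := hpar (s.pos + 1)
  have ha := aTilde_add_one s.pos
  have hd := hs.two_dvd_locLeft_sub
  have hc := abs_le.mp hs.abs_locLeft_sub_le
  have hr := abs_le.mp hs.abs_locRight_sub_le
  have hf' : s.stepRight.modLoc = update s.modLoc (s.pos + 1) (s.locRight + 1) :=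
    s.stepRight_modLoc
  have hnew : s.stepRight.modLoc (s.pos + 1) = s.locRight + 1 := by rw [hf', update_self]
  have hold : ∀ x ≠ s.pos + 1, s.stepRight.modLoc x = s.modLoc x := fun x hx => by
    rw [hf', update_of_ne hx]
  rw [modLoc_pos] at h0
  refine ⟨fun x => ?_, ?_, fun x => ?_, ?_, fun x hx => ?_, ?_, ?_, ?_, ?_, ?_⟩
  · rcases eq_or_ne x (s.pos + 1) with rfl | hx
    · rw [hnew]; have := hs.neg_one_le_locRight; omega
    · rw [hold x hx]; exact hs.neg_one_le_modLoc x
  · rw [stepRight_locRight]; exact hs.neg_one_le_modLoc _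
  · rcases eq_or_ne x (s.pos + 1) with rfl | hx
    · rw [hnew]; omega
    · rw [hold x hx]; exact hpar x
  · rw [stepRight_locLeft, stepRight_locRight]; omega
  · rw [stepRight_pos] at hx
    rcases eq_or_ne x s.pos with rfl | hxp
    · rw [hnew, hold _ (by omega), modLoc_pos]; exact abs_le.mpr ⟨by omega, by omega⟩
    · rw [hold _ (by omega), hold x hx]
      exact hs.abs_modLoc_succ_sub_le x hxp
  · rw [stepRight_locRight, stepRight_pos,
      hold _ (by omega), abs_sub_comm]
    exact hs.abs_modLoc_succ_sub_le _ (by omega)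
  · rw [stepRight_locLeft, stepRight_locRight]; exact abs_le.mpr ⟨by omega, by omega⟩
  · rw [stepRight_locLeft]; have := hs.neg_one_le_locRight; omega
  · rw [hf']; exact hasFiniteSupport_update_sub hs.hasFiniteSupport _ _
  · have harea := hs.area
    rw [hf', areaA_update hs.hasFiniteSupport, stepRight_locLeft, stepRight_locRight]
    show 2 * (s.nextCoins : ℤ) = _
    unfold nextCoins; split_ifs <;> push_cast <;> omega

theorem Inv.stepLeft (hs : s.Inv) (hle : s.locLeft ≤ s.locRight) : s.stepLeft.Inv := by
  have hpar := hs.two_dvd_modLoc_sub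
  have h0 := hpar s.pos
  have h1 := hpar (s.pos - 1)
  have ha := aTilde_add_one (s.pos - 1)
  have hd := hs.two_dvd_locLeft_sub
  have hc := abs_le.mp hs.abs_locLeft_sub_le
  have hr := abs_le.mp hs.abs_locRight_sub_le
  have hl := abs_le.mp (hs.abs_modLoc_succ_sub_le (s.pos - 1) (by omega))
  have hm := hs.neg_one_le_modLoc s.pos
  have hf' : s.stepLeft.modLoc = update s.modLoc s.pos s.locRight := s.stepLeft_modLoc
  have hnew : s.stepLeft.modLoc s.pos = s.locRight := by rw [hf', update_self]
  have hold : ∀ x ≠ s.pos, s.stepLeft.modLoc x = s.modLoc x := fun x hx => by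
    rw [hf', update_of_ne hx]
  rw [sub_add_cancel] at ha hl
  rw [modLoc_pos] at h0 hl hm
  refine ⟨fun x => ?_, ?_, fun x => ?_, ?_, fun x hx => ?_, ?_, ?_, ?_, ?_, ?_⟩
  · rcases eq_or_ne x s.pos with rfl | hx
    · rw [hnew]; exact hs.neg_one_le_locRight
    · rw [hold x hx]; exact hs.neg_one_le_modLoc x
  · rw [stepLeft_locRight]; omega
  · rcases eq_or_ne x s.pos with rfl | hx
    · rw [hnew]; omega
    · rw [hold x hx]; exact hpar x
  · rw [stepLeft_locLeft, stepLeft_locRight]; omega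
  · rw [stepLeft_pos] at hx
    rcases eq_or_ne x s.pos with rfl | hxp
    · rw [hnew, hold _ (by omega)]; exact abs_le.mpr ⟨by omega, by omega⟩
    · rw [hold _ (by omega), hold x hxp]
      exact hs.abs_modLoc_succ_sub_le x hxp
  · rw [stepLeft_locRight, stepLeft_pos, sub_add_cancel, hnew]
    exact abs_le.mpr ⟨by omega, by omega⟩
  · rw [stepLeft_locLeft, stepLeft_locRight]; exact abs_le.mpr ⟨by omega, by omega⟩
  · rw [stepLeft_locRight]; omega
  · rw [hf']; exact hasFiniteSupport_update_sub hs.hasFiniteSupport _ _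
  · have harea := hs.area
    rw [hf', areaA_update hs.hasFiniteSupport, stepLeft_locLeft, stepLeft_locRight, modLoc_pos]
    show 2 * (s.nextCoins : ℤ) = _
    unfold nextCoins; split_ifs <;> push_cast <;> omega

theorem Inv.max_srwStep (hs : s.Inv) {ε : ℕ → ℤ} (hε : ε s.coins = 1 ∨ ε s.coins = -1)
    (hne : s.locLeft ≠ s.locRight) :
    max (srwStep ε s).locLeft (srwStep ε s).locRight = max s.locLeft s.locRight - 1 := by
  have hd := hs.two_dvd_locLeft_sub
  have hc := abs_le.mp hs.abs_locLeft_sub_le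
  rcases s.srwStep_eq_stepRight_or_stepLeft hε with ⟨hle, h⟩ | ⟨hle, h⟩ <;> rw [h]
  · have hr := abs_le.mp hs.abs_locRight_sub_le
    rw [stepRight_locLeft, stepRight_locRight]; omega
  · have hl := abs_le.mp (hs.abs_modLoc_succ_sub_le (s.pos - 1) (by omega))
    rw [sub_add_cancel, modLoc_pos] at hl
    rw [stepLeft_locLeft, stepLeft_locRight]; omega

theorem Inv.srwStep (hs : s.Inv) {ε : ℕ → ℤ} (hε : ε s.coins = 1 ∨ ε s.coins = -1) :
    (srwStep ε s).Inv := by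
  rcases s.srwStep_eq_stepRight_or_stepLeft hε with ⟨hle, h⟩ | ⟨hle, h⟩
  · exact h ▸ hs.stepRight hle
  · exact h ▸ hs.stepLeft hle

theorem Inv.aTilde_le_modLoc (hs : s.Inv) (x : ℤ) : aTilde x ≤ s.modLoc x :=
  aTilde_le_of_two_dvd_sub (hs.neg_one_le_modLoc x) (hs.two_dvd_modLoc_sub x)

/-- At an equality time `ℓ~` is `1`-Lipschitz also across the walker's position. -/
theorem Inv.locRight_sq_le_areaA (hs : s.Inv) (heq : s.locLeft = s.locRight) :
    s.locRight ^ 2 ≤ areaA s.modLoc := by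
  have hlip : ∀ x, |s.modLoc (x + 1) - s.modLoc x| ≤ 1 := fun x => by
    rcases eq_or_ne x s.pos with rfl | hx
    · rw [modLoc_pos, heq, abs_sub_comm]; exact hs.abs_locRight_sub_le
    · exact hs.abs_modLoc_succ_sub_le x hx
  have hpos : 0 ≤ s.modLoc s.pos := by rw [modLoc_pos]; rcases hs.nonneg with h | h <;> omega
  have := sq_le_areaA s.pos hlip hs.aTilde_le_modLoc hs.hasFiniteSupport hpos
  rwa [modLoc_pos, heq] at this

end SRWState

open SRWState

theorem srw_zero_modLoc (ε : ℕ → ℤ) : (srw ε 0).modLoc = aTilde := by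
  funext x
  by_cases hx : x ≤ 0
  · simp [SRWState.modLoc, srw, aInit, aTilde, hx, show ¬ 1 ≤ x by omega]
  · simp [SRWState.modLoc, srw, aInit, aTilde, hx, show 0 ≤ x by omega]

theorem inv_srw (ε : ℕ → ℤ) (hε : ∀ j, ε j = 1 ∨ ε j = -1) (n : ℕ) : (srw ε n).Inv := by
  induction n with
  | succ n ih => exact ih.srwStep (hε _)
  | zero =>
    have hf := srw_zero_modLoc ε
    have hL : (srw ε 0).locLeft = 0 := rfl
    have hR : (srw ε 0).locRight = 0 := rfl
    refine ⟨fun x => ?_, by rw [hR]; norm_num, fun x => by simp [hf], by simp [hL, hR],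
      fun x _ => ?_, ?_, by simp [hL, hR], by simp [hL], by simp [hf, HasFiniteSupport],
      ?_⟩
    · rw [hf]; unfold aTilde; split <;> norm_num
    · rw [hf, aTilde_add_one]; unfold aTilde; split <;> norm_num
    · rw [hR, hf, show (srw ε 0).pos = 0 from rfl]; simp [aTilde]
    · rw [hf, areaA_aTilde, hL, hR]; rfl

theorem isEqTime_iff (ε : ℕ → ℤ) (n : ℕ) :
    IsEqTime ε n ↔ (srw ε n).locLeft = (srw ε n).locRight := Iff.rfl

theorem coins_srw (ε : ℕ → ℤ) [DecidablePred (IsEqTime ε)] (n : ℕ) :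
    (srw ε n).coins = Nat.count (IsEqTime ε) n := by
  induction n with
  | zero => rfl
  | succ n ih =>
    show (srw ε n).nextCoins = _
    rw [Nat.count_succ, ← ih, nextCoins]
    by_cases h : IsEqTime ε n
    · rw [if_pos ((isEqTime_iff ε n).mp h), if_pos h]
    · rw [if_neg ((isEqTime_iff ε n).not.mp h), if_neg h, add_zero]

theorem infinite_setOf_isEqTime (ε : ℕ → ℤ) (hε : ∀ j, ε j = 1 ∨ ε j = -1) :
    {n | IsEqTime ε n}.Infinite := by
  refine Set.infinite_of_forall_exists_gt fun a => ?_
  by_contra! hnone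
  let μ (n : ℕ) : ℤ := max (srw ε n).locLeft (srw ε n).locRight
  have hdrop (t : ℕ) : μ (a + 1 + t) = μ (a + 1) - t := by
    induction t with
    | zero => simp
    | succ t ih =>
      have hne : ¬ IsEqTime ε (a + 1 + t) := fun h => by have := hnone _ h; omega
      push_cast
      rw [← add_assoc, ← sub_sub, ← ih]
      exact (inv_srw ε hε _).max_srwStep (hε _) hne
  have hneg := hdrop ((μ (a + 1)).toNat + 1)
  have hnonneg (n : ℕ) : 0 ≤ μ n := by
    rcases (inv_srw ε hε n).nonneg with h | h
    · exact h.trans (le_max_left _ _)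
    · exact h.trans (le_max_right _ _)
  have := hnonneg (a + 1 + ((μ (a + 1)).toNat + 1))
  omega

/-- for every `k`, writing `𝒜 = 𝒜(ℓ~_{N(k)})`, one has
`𝒜/2 ≤ k ≤ 𝒜/2 + √𝒜`. -/
theorem statement2 (ε : ℕ → ℤ) (hε : ∀ j, ε j = 1 ∨ ε j = -1) (k : ℕ) :
    (areaA (modLoc ε (timeN ε k)) : ℝ) / 2 ≤ (k : ℝ) ∧
      (k : ℝ) ≤ (areaA (modLoc ε (timeN ε k)) : ℝ) / 2 +
        Real.sqrt (areaA (modLoc ε (timeN ε k))) := by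
  classical
  have hinf := infinite_setOf_isEqTime ε hε
  set s := srw ε (timeN ε k)
  change (areaA s.modLoc : ℝ) / 2 ≤ k ∧ (k : ℝ) ≤ areaA s.modLoc / 2 + √(areaA s.modLoc)
  have hs : s.Inv := inv_srw ε hε _
  have heq : s.locLeft = s.locRight := Nat.nth_mem_of_infinite hinf k
  have hk : s.coins = k := (coins_srw ε _).trans (Nat.count_nth_of_infinite hinf k)
  have hH : 0 ≤ s.locRight := by rcases hs.nonneg with h | h <;> omega
  have harea : 2 * (k : ℝ) = areaA s.modLoc + 2 * s.locRight := by
    have := hs.area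
    rw [heq, max_self, hk] at this
    exact_mod_cast this.trans (by ring)
  have hroot : (s.locRight : ℝ) ≤ √(areaA s.modLoc) :=
    (le_abs_self _).trans (Real.abs_le_sqrt (by exact_mod_cast hs.locRight_sq_le_areaA heq))
  have hH' : (0 : ℝ) ≤ s.locRight := by exact_mod_cast hH
  constructor <;> linarith
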